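/- The following explicit loop in SO(3) is null-homotopic (path-homotopic, relative to its endpoints, to the constant loop at the identity matrix, within the subspace SO(3) of 3×3 real matrices): the concatenation of the three paths of orthonormal 2-frames, each completed to an SO(3)-valued path by the rule (v₁, v₂) ↦ [v₁×v₂ | v₁ | v₂], given for t ∈ [0,1] by: (1) v₁(t) = e₁, v₂(t) = cos(πt)·e₂ + sin(πt)·ē, running from [e₁, e₂] to [e₁, −e₂]; (2) v₁(t) = cos(πt)·e₁ − sin(πt)·e₂, v₂(t) = −cos(πt)·e₂ − sin(πt)·e₁, running from [e₁, −e₂] to [−e₁, e₂]; (3) v₁(t) = −cos(πt)·e₁ + sin(πt)·ē, v₂(t) = e₂, running from [−e₁, e₂] back to [e₁, e₂]. (This is the verification that the loop (⁺₊⁻₊)·(⁻₊⁺₋)·(⁺₋⁺₊) of the coherent system of frame paths is null-homotopic in SO(3).) -/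
import Mathlib


noncomputable section

open Real

set_option linter.unnecessarySeqFocus false

/-- `SO(3)`: the special orthogonal group of 3×3 real matrices, topologized as a subspace
of the 3×3 matrices. -/
abbrev SO3 := {M : Matrix (Fin 3) (Fin 3) ℝ // M.transpose * M = 1 ∧ M.det = 1}

/-- The standard basis vector `ē = (1,0,0)` of `ℝ³`. -/
def eBar : Fin 3 → ℝ := ![1, 0, 0]

/-- The standard basis vector `e₁ = (0,1,0)` of `ℝ³`. -/
def eOne : Fin 3 → ℝ := ![0, 1, 0]

/-- The standard basis vector `e₂ = (0,0,1)` of `ℝ³`. -/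
def eTwo : Fin 3 → ℝ := ![0, 0, 1]

/-- The matrix `[v₁×v₂ | v₁ | v₂]` whose columns are `v₁×v₂`, `v₁`, `v₂`; for an
orthonormal pair `(v₁, v₂)` it lies in `SO(3)`. -/
def frameMatrix (v₁ v₂ : Fin 3 → ℝ) : Matrix (Fin 3) (Fin 3) ℝ :=
  Matrix.of fun i j => ![crossProduct v₁ v₂, v₁, v₂] j i

/-- The identity element of `SO(3)`; it is the matrix of the frame `[e₁, e₂]`. -/
def so3One : SO3 := ⟨1, by simp, by simp⟩

/-- The frame `[e₁, −e₂]` as an element of `SO(3)`. -/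
def so3PM : SO3 := ⟨frameMatrix eOne (-eTwo), by
  refine ⟨?_, ?_⟩
  · ext i j
    fin_cases i <;> fin_cases j <;>
      simp [frameMatrix, cross_apply, eOne, eTwo, Matrix.mul_apply, Fin.sum_univ_three,
        Matrix.one_apply, Matrix.transpose_apply, Matrix.vecHead, Matrix.vecTail]
  · simp [frameMatrix, cross_apply, eOne, eTwo, Matrix.det_fin_three, Matrix.vecHead,
      Matrix.vecTail]⟩

/-- The frame `[−e₁, e₂]` as an element of `SO(3)`. -/
def so3MP : SO3 := ⟨frameMatrix (-eOne) eTwo, by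
  refine ⟨?_, ?_⟩
  · ext i j
    fin_cases i <;> fin_cases j <;>
      simp [frameMatrix, cross_apply, eOne, eTwo, Matrix.mul_apply, Fin.sum_univ_three,
        Matrix.one_apply, Matrix.transpose_apply, Matrix.vecHead, Matrix.vecTail]
  · simp [frameMatrix, cross_apply, eOne, eTwo, Matrix.det_fin_three, Matrix.vecHead,
      Matrix.vecTail]⟩

/-- The frame path `(⁺₊⁻₊)`: `v₁(t) = e₁`, `v₂(t) = cos(πt)·e₂ + sin(πt)·ē`, running from
`[e₁, e₂]` (the identity) to `[e₁, −e₂]`; it rotates `180°` around the `e₁`-axis so that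
the second vector equals `ē` halfway through. -/
def pathA : Path so3One so3PM where
  toFun t := ⟨frameMatrix eOne (fun i => cos (π * t) * eTwo i + sin (π * t) * eBar i), by
    have h := sin_sq_add_cos_sq (π * (t : ℝ))
    refine ⟨?_, ?_⟩
    · ext i j
      fin_cases i <;> fin_cases j <;>
        (simp [frameMatrix, cross_apply, eOne, eTwo, eBar, Matrix.mul_apply,
          Fin.sum_univ_three, Matrix.one_apply, Matrix.transpose_apply, Matrix.vecHead,
          Matrix.vecTail] <;> nlinarith [h])
    · simp [frameMatrix, cross_apply, eOne, eTwo, eBar, Matrix.det_fin_three,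
        Matrix.vecHead, Matrix.vecTail] <;> nlinarith [h]⟩
  continuous_toFun := by
    apply Continuous.subtype_mk
    apply continuous_matrix
    intro i j
    fin_cases i <;> fin_cases j <;>
      (simp [frameMatrix, cross_apply, eOne, eTwo, eBar, Matrix.vecHead, Matrix.vecTail] <;>
        fun_prop)
  source' := by
    apply Subtype.ext
    ext i j
    fin_cases i <;> fin_cases j <;>
      simp [frameMatrix, cross_apply, eOne, eTwo, eBar, so3One, Matrix.one_apply,
        Matrix.vecHead, Matrix.vecTail]
  target' := by
    apply Subtype.ext
    ext i j
    fin_cases i <;> fin_cases j <;>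
      simp [frameMatrix, cross_apply, eOne, eTwo, eBar, so3PM, Matrix.vecHead,
        Matrix.vecTail]

/-- The frame path `(⁻₊⁺₋)`: `v₁(t) = cos(πt)·e₁ − sin(πt)·e₂`,
`v₂(t) = −cos(πt)·e₂ − sin(πt)·e₁`, running from `[e₁, −e₂]` to `[−e₁, e₂]`; it rotates
`180°` around the `ē`-axis so that the second vector equals `−e₁` halfway through. -/
def pathB : Path so3PM so3MP where
  toFun t := ⟨frameMatrix (fun i => cos (π * t) * eOne i - sin (π * t) * eTwo i)
      (fun i => -cos (π * t) * eTwo i - sin (π * t) * eOne i), by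
    have h := sin_sq_add_cos_sq (π * (t : ℝ))
    refine ⟨?_, ?_⟩
    · ext i j
      fin_cases i <;> fin_cases j <;>
        (simp [frameMatrix, cross_apply, eOne, eTwo, eBar, Matrix.mul_apply,
          Fin.sum_univ_three, Matrix.one_apply, Matrix.transpose_apply, Matrix.vecHead,
          Matrix.vecTail] <;> nlinarith [h])
    · simp [frameMatrix, cross_apply, eOne, eTwo, eBar, Matrix.det_fin_three,
        Matrix.vecHead, Matrix.vecTail] <;> nlinarith [h]⟩
  continuous_toFun := by
    apply Continuous.subtype_mk
    apply continuous_matrix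
    intro i j
    fin_cases i <;> fin_cases j <;>
      (simp [frameMatrix, cross_apply, eOne, eTwo, eBar, Matrix.vecHead, Matrix.vecTail] <;>
        fun_prop)
  source' := by
    apply Subtype.ext
    ext i j
    fin_cases i <;> fin_cases j <;>
      simp [frameMatrix, cross_apply, eOne, eTwo, eBar, so3PM, Matrix.vecHead,
        Matrix.vecTail]
  target' := by
    apply Subtype.ext
    ext i j
    fin_cases i <;> fin_cases j <;>
      simp [frameMatrix, cross_apply, eOne, eTwo, eBar, so3MP, Matrix.vecHead,
        Matrix.vecTail]

/-- The frame path `(⁺₋⁺₊)`: `v₁(t) = −cos(πt)·e₁ + sin(πt)·ē`, `v₂(t) = e₂`, running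
from `[−e₁, e₂]` back to `[e₁, e₂]`; it rotates `180°` around the `e₂`-axis so that the
first vector equals `ē` halfway through. -/
def pathC : Path so3MP so3One where
  toFun t := ⟨frameMatrix (fun i => -cos (π * t) * eOne i + sin (π * t) * eBar i) eTwo, by
    have h := sin_sq_add_cos_sq (π * (t : ℝ))
    refine ⟨?_, ?_⟩
    · ext i j
      fin_cases i <;> fin_cases j <;>
        (simp [frameMatrix, cross_apply, eOne, eTwo, eBar, Matrix.mul_apply,
          Fin.sum_univ_three, Matrix.one_apply, Matrix.transpose_apply, Matrix.vecHead,
          Matrix.vecTail] <;> nlinarith [h])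
    · simp [frameMatrix, cross_apply, eOne, eTwo, eBar, Matrix.det_fin_three,
        Matrix.vecHead, Matrix.vecTail] <;> nlinarith [h]⟩
  continuous_toFun := by
    apply Continuous.subtype_mk
    apply continuous_matrix
    intro i j
    fin_cases i <;> fin_cases j <;>
      (simp [frameMatrix, cross_apply, eOne, eTwo, eBar, Matrix.vecHead, Matrix.vecTail] <;>
        fun_prop)
  source' := by
    apply Subtype.ext
    ext i j
    fin_cases i <;> fin_cases j <;>
      simp [frameMatrix, cross_apply, eOne, eTwo, eBar, so3MP, Matrix.vecHead,
        Matrix.vecTail]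
  target' := by
    apply Subtype.ext
    ext i j
    fin_cases i <;> fin_cases j <;>
      simp [frameMatrix, cross_apply, eOne, eTwo, eBar, so3One, Matrix.one_apply,
        Matrix.vecHead, Matrix.vecTail]

/-! ### Auxiliary machinery: quaternion parametrization of the loop and its contraction -/

namespace SO3Null

/-- Rotation matrix of the (nonzero, not necessarily unit) quaternion `a + bi + cj + dk`,
rescaled by the inverse of its squared norm. -/
def rotM (a b c d : ℝ) : Matrix (Fin 3) (Fin 3) ℝ :=
  Matrix.of fun i j => (a^2+b^2+c^2+d^2)⁻¹ *
    ![![a^2+b^2-c^2-d^2, 2*(b*c-a*d), 2*(b*d+a*c)],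
      ![2*(b*c+a*d), a^2-b^2+c^2-d^2, 2*(c*d-a*b)],
      ![2*(b*d-a*c), 2*(c*d+a*b), a^2-b^2-c^2+d^2]] i j

set_option maxHeartbeats 1000000 in
theorem rotM_mem (a b c d : ℝ) (h : a^2+b^2+c^2+d^2 ≠ 0) :
    (rotM a b c d).transpose * rotM a b c d = 1 ∧ (rotM a b c d).det = 1 := by
  constructor
  · ext i j
    fin_cases i <;> fin_cases j <;>
      (simp [rotM, Matrix.mul_apply, Fin.sum_univ_three, Matrix.one_apply,
        Matrix.transpose_apply, Matrix.vecHead, Matrix.vecTail] <;> field_simp <;> ring)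
  · simp [rotM, Matrix.det_fin_three, Matrix.vecHead, Matrix.vecTail]
    field_simp
    ring

/-- First component of the quaternion lift of the loop. -/
noncomputable def qa (t : ℝ) : ℝ :=
  if t ≤ 1/4 then cos (2*π*t) else if t ≤ 1/2 then 0 else -cos (π*t)

/-- `j` component of the quaternion lift of the loop. -/
noncomputable def qc (t : ℝ) : ℝ := if t ≤ 1/2 then sin (2*π*t) else 0

/-- `k` component of the quaternion lift of the loop. -/
noncomputable def qd (t : ℝ) : ℝ :=
  if t ≤ 1/4 then 0 else if t ≤ 1/2 then cos (2*π*t) else -sin (π*t)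

theorem qa_cont : Continuous qa := by
  unfold qa
  apply Continuous.if_le
  · fun_prop
  · apply Continuous.if_le <;> try fun_prop
    intro x hx
    norm_num [hx, show π * ((1:ℝ)/2) = π/2 by ring]
  · fun_prop
  · fun_prop
  · intro x hx
    norm_num [hx, show 2*π*((1:ℝ)/4) = π/2 by ring]

theorem qc_cont : Continuous qc := by
  unfold qc
  apply Continuous.if_le <;> try fun_prop
  intro x hx
  norm_num [hx, show 2*π*((1:ℝ)/2) = π by ring]

theorem qd_cont : Continuous qd := by
  unfold qd
  apply Continuous.if_le
  · fun_prop
  · apply Continuous.if_le <;> try fun_prop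
    intro x hx
    norm_num [hx, show 2*π*((1:ℝ)/2) = π by ring, show π*((1:ℝ)/2) = π/2 by ring]
  · fun_prop
  · fun_prop
  · intro x hx
    norm_num [hx, show 2*π*((1:ℝ)/4) = π/2 by ring]

theorem q_norm (t : ℝ) : qa t^2 + qc t^2 + qd t^2 = 1 := by
  unfold qa qc qd
  split_ifs with h1 h2 h2 <;> try linarith
  · have := sin_sq_add_cos_sq (2*π*t); nlinarith
  · have := sin_sq_add_cos_sq (2*π*t); nlinarith
  · have := sin_sq_add_cos_sq (π*t); nlinarith

theorem qa_nonneg (t : ℝ) (h0 : 0 ≤ t) (h1 : t ≤ 1) : 0 ≤ qa t := by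
  unfold qa
  split_ifs with ha hb
  · apply cos_nonneg_of_mem_Icc
    constructor <;> nlinarith [pi_pos]
  · exact le_refl 0
  · push_neg at ha hb
    simp only [neg_nonneg]
    apply cos_nonpos_of_pi_div_two_le_of_le <;> nlinarith [pi_pos]

theorem n_pos (u t : ℝ) (hu0 : 0 ≤ u) (hu1 : u ≤ 1) (ht0 : 0 ≤ t) (ht1 : t ≤ 1) :
    0 < ((1-u)*qa t + u)^2 + (0:ℝ)^2 + ((1-u)*qc t)^2 + ((1-u)*qd t)^2 := by
  nlinarith [q_norm t, qa_nonneg t ht0 ht1, sq_nonneg (2*u-1),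
    mul_nonneg (mul_nonneg hu0 (sub_nonneg.2 hu1)) (qa_nonneg t ht0 ht1)]

open unitInterval in
/-- The contraction of the loop, as a map `I × I → SO3`. -/
noncomputable def Hfun (p : I × I) : SO3 :=
  ⟨rotM ((1-(p.1:ℝ))*qa p.2 + p.1) 0 ((1-(p.1:ℝ))*qc p.2) ((1-(p.1:ℝ))*qd p.2),
   rotM_mem _ _ _ _ (ne_of_gt (n_pos _ _ p.1.2.1 p.1.2.2 p.2.2.1 p.2.2.2))⟩

end SO3Null


namespace SO3Null
theorem rotA (s : ℝ) :
    rotM (cos (π*s/2)) 0 (sin (π*s/2)) 0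
      = frameMatrix eOne (fun i => cos (π*s) * eTwo i + sin (π*s) * eBar i) := by
  have h1 : sin (π*s/2)^2 + cos (π*s/2)^2 = 1 := sin_sq_add_cos_sq _
  have hc : cos (π*s) = cos (π*s/2)^2 - sin (π*s/2)^2 := by
    have := cos_two_mul' (π*s/2); rwa [show 2*(π*s/2) = π*s by ring] at this
  have hs : sin (π*s) = 2 * sin (π*s/2) * cos (π*s/2) := by
    have := sin_two_mul (π*s/2); rwa [show 2*(π*s/2) = π*s by ring] at this
  ext i j
  fin_cases i <;> fin_cases j <;>
    (simp [rotM, frameMatrix, cross_apply, eOne, eTwo, eBar, Matrix.vecHead, Matrix.vecTail,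
      hc, hs] <;> nlinarith [h1])

theorem rotB (s : ℝ) :
    rotM 0 0 (cos (π*s/2)) (-sin (π*s/2))
      = frameMatrix (fun i => cos (π*s) * eOne i - sin (π*s) * eTwo i)
          (fun i => -cos (π*s) * eTwo i - sin (π*s) * eOne i) := by
  have h1 : sin (π*s/2)^2 + cos (π*s/2)^2 = 1 := sin_sq_add_cos_sq _
  have hc : cos (π*s) = cos (π*s/2)^2 - sin (π*s/2)^2 := by
    have := cos_two_mul' (π*s/2); rwa [show 2*(π*s/2) = π*s by ring] at this
  have hs : sin (π*s) = 2 * sin (π*s/2) * cos (π*s/2) := by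
    have := sin_two_mul (π*s/2); rwa [show 2*(π*s/2) = π*s by ring] at this
  ext i j
  fin_cases i <;> fin_cases j <;>
    (simp [rotM, frameMatrix, cross_apply, eOne, eTwo, eBar, Matrix.vecHead, Matrix.vecTail,
      hc, hs] <;> nlinarith [h1])

theorem rotC (s : ℝ) :
    rotM (sin (π*s/2)) 0 0 (-cos (π*s/2))
      = frameMatrix (fun i => -cos (π*s) * eOne i + sin (π*s) * eBar i) eTwo := by
  have h1 : sin (π*s/2)^2 + cos (π*s/2)^2 = 1 := sin_sq_add_cos_sq _
  have hc : cos (π*s) = cos (π*s/2)^2 - sin (π*s/2)^2 := by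
    have := cos_two_mul' (π*s/2); rwa [show 2*(π*s/2) = π*s by ring] at this
  have hs : sin (π*s) = 2 * sin (π*s/2) * cos (π*s/2) := by
    have := sin_two_mul (π*s/2); rwa [show 2*(π*s/2) = π*s by ring] at this
  ext i j
  fin_cases i <;> fin_cases j <;>
    (simp [rotM, frameMatrix, cross_apply, eOne, eTwo, eBar, Matrix.vecHead, Matrix.vecTail,
      hc, hs] <;> nlinarith [h1])
end SO3Null


namespace SO3Null
open unitInterval in
theorem key (t : I) :
    (((pathA.trans pathB).trans pathC) t).1 = rotM (qa t) 0 (qc t) (qd t) := by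
  obtain ⟨t, ht0, ht1⟩ := t
  by_cases h2 : t ≤ 1/2
  · rw [Path.trans_apply]
    split_ifs with hA
    · rw [Path.trans_apply]
      by_cases h4 : t ≤ 1/4
      · split_ifs with hB
        · show (pathA _).1 = _
          rw [show qa t = cos (π*(2*(2*t))/2) from by unfold qa; rw [if_pos h4]; congr 1; ring,
            show qc t = sin (π*(2*(2*t))/2) from by unfold qc; rw [if_pos h2]; congr 1; ring,
            show qd t = 0 from by unfold qd; rw [if_pos h4], rotA]
          simp [pathA]
        · exact absurd (show (2*t : ℝ) ≤ 1/2 by linarith) hB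
      · split_ifs with hB
        · exact absurd (show ¬((2*t : ℝ) ≤ 1/2) by push_neg; push_neg at h4; linarith) (by simpa using hB)
        · show (pathB _).1 = _
          rw [show qa t = 0 from by unfold qa; rw [if_neg h4, if_pos h2],
            show qc t = cos (π*(2*(2*t)-1)/2) from by
              unfold qc; rw [if_pos h2, show π*(2*(2*t)-1)/2 = 2*π*t - π/2 by ring,
                cos_sub_pi_div_two],
            show qd t = -sin (π*(2*(2*t)-1)/2) from by
              unfold qd; rw [if_neg h4, if_pos h2, show π*(2*(2*t)-1)/2 = 2*π*t - π/2 by ring,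
                sin_sub_pi_div_two, neg_neg],
            rotB]
          simp [pathB]
    · exact absurd h2 hA
  · rw [Path.trans_apply]
    split_ifs with hA
    · exact absurd (show (t:ℝ) ≤ 1/2 from hA) h2
    · show (pathC _).1 = _
      push_neg at h2
      rw [show qa t = sin (π*(2*t-1)/2) from by
          unfold qa; rw [if_neg (by linarith), if_neg (by linarith),
            show π*(2*t-1)/2 = π*t - π/2 by ring, sin_sub_pi_div_two],
        show qc t = 0 from by unfold qc; rw [if_neg (by linarith)],
        show qd t = -cos (π*(2*t-1)/2) from by
          unfold qd; rw [if_neg (by linarith), if_neg (by linarith),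
            show π*(2*t-1)/2 = π*t - π/2 by ring, cos_sub_pi_div_two],
        rotC]
      simp [pathC]
end SO3Null


namespace SO3Null
set_option maxHeartbeats 800000 in
theorem rotM_one : rotM 1 0 0 0 = 1 := by
  ext i j
  fin_cases i <;> fin_cases j <;>
    norm_num [rotM, Matrix.one_apply, Matrix.vecHead, Matrix.vecTail, Fin.ext_iff]

theorem q_zero : qa 0 = 1 ∧ qc 0 = 0 ∧ qd 0 = 0 := by norm_num [qa, qc, qd]
theorem q_one : qa 1 = 1 ∧ qc 1 = 0 ∧ qd 1 = 0 := by norm_num [qa, qc, qd]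

open unitInterval in
theorem Hfun_cont : Continuous Hfun := by
  have hu : Continuous fun p : I × I => (p.1 : ℝ) :=
    continuous_subtype_val.comp continuous_fst
  have ht : Continuous fun p : I × I => (p.2 : ℝ) :=
    continuous_subtype_val.comp continuous_snd
  have hqa : Continuous fun p : I × I => qa p.2 := qa_cont.comp ht
  have hqc : Continuous fun p : I × I => qc p.2 := qc_cont.comp ht
  have hqd : Continuous fun p : I × I => qd p.2 := qd_cont.comp ht
  have hva : Continuous fun p : I × I => (1-(p.1:ℝ))*qa p.2 + p.1 :=
    ((continuous_const.sub hu).mul hqa).add hu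
  have hvc : Continuous fun p : I × I => (1-(p.1:ℝ))*qc p.2 :=
    (continuous_const.sub hu).mul hqc
  have hvd : Continuous fun p : I × I => (1-(p.1:ℝ))*qd p.2 :=
    (continuous_const.sub hu).mul hqd
  have hn : Continuous fun p : I × I =>
      ((1-(p.1:ℝ))*qa p.2 + p.1)^2 + ((1-(p.1:ℝ))*qc p.2)^2
        + ((1-(p.1:ℝ))*qd p.2)^2 :=
    ((hva.pow 2).add (hvc.pow 2)).add (hvd.pow 2)
  have hninv : Continuous fun p : I × I =>
      (((1-(p.1:ℝ))*qa p.2 + p.1)^2 + ((1-(p.1:ℝ))*qc p.2)^2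
        + ((1-(p.1:ℝ))*qd p.2)^2)⁻¹ :=
    hn.inv₀ fun p => ne_of_gt (by
      have h := n_pos (p.1:ℝ) (p.2:ℝ) p.1.2.1 p.1.2.2 p.2.2.1 p.2.2.2
      nlinarith [h])
  apply Continuous.subtype_mk
  apply continuous_matrix
  intro i j
  fin_cases i <;> fin_cases j <;>
    · simp only [rotM, Matrix.of_apply]
      simp [Matrix.vecHead, Matrix.vecTail]
      first
      | (apply Continuous.mul hninv; fun_prop)
      | (apply Continuous.neg; apply Continuous.mul hninv; fun_prop)

open unitInterval in
theorem Hfun_end (u t : I) (h : qa t = 1 ∧ qc t = 0 ∧ qd t = 0) : Hfun (u, t) = so3One := by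
  apply Subtype.ext
  show rotM _ _ _ _ = _
  rw [h.1, h.2.1, h.2.2]
  simpa [so3One] using rotM_one

end SO3Null

open unitInterval in
theorem loop_nullhomotopic' :
    ((pathA.trans pathB).trans pathC).Homotopic (Path.refl so3One) := by
  refine ⟨⟨⟨⟨fun p => SO3Null.Hfun p, SO3Null.Hfun_cont⟩, ?_, ?_⟩, ?_⟩⟩
  · intro t
    apply Subtype.ext
    show SO3Null.rotM _ _ _ _ = _
    simp only [Set.Icc.coe_zero, sub_zero, one_mul, add_zero]
    exact (SO3Null.key t).symm
  · intro t
    apply Subtype.ext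
    show SO3Null.rotM _ _ _ _ = _
    norm_num
    simpa [so3One, Path.refl] using SO3Null.rotM_one
  · intro u t hts
    rcases hts with h | h
    · subst h
      show SO3Null.Hfun (u, 0) = _
      rw [SO3Null.Hfun_end u 0 SO3Null.q_zero]
      simp [Path.source]
    · have h1 : t = 1 := h
      subst h1
      show SO3Null.Hfun (u, 1) = _
      rw [SO3Null.Hfun_end u 1 SO3Null.q_one]
      simp [Path.target]

/-- The loop `(⁺₊⁻₊)·(⁻₊⁺₋)·(⁺₋⁺₊)` of standard frame paths is null-homotopic in `SO(3)`:
it is path-homotopic, rel endpoints, to the constant loop at the identity. -/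
theorem loop_ppm_mpp_mpp_nullhomotopic :
    ((pathA.trans pathB).trans pathC).Homotopic (Path.refl so3One) :=
  loop_nullhomotopic'


end
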